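/- arXiv:1609.08106 — 3 statements merged into one kernel-verified Lean document; each statement's English description precedes it below -/
import Mathlib

section
/- The number of inversion sequences of length n with no indices i < j < k satisfying e_i ≤ e_j, e_j ≥ e_k, and e_i ≠ e_k equals (n-1)·2^{n-2} + 1 for n ≥ 1 (interpreting the formula as 1 when n = 1). -/
/-- An inversion sequence of length `n`: `e i < i + 1` (0-indexed). -/
def InvSeq (n : ℕ) : Type := ∀ i : Fin n, Fin (i.1 + 1)

namespace Inv16

instance instFin (n : ℕ) : Fintype (InvSeq n) :=
  inferInstanceAs (Fintype (∀ i : Fin n, Fin (i.1 + 1)))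

instance instDecEq (n : ℕ) : DecidableEq (InvSeq n) :=
  inferInstanceAs (DecidableEq (∀ i : Fin n, Fin (i.1 + 1)))

/-- Nonzero entries strictly increase. -/
def Qa {n : ℕ} (e : InvSeq n) : Prop :=
  ∀ i j : Fin n, i < j → (e i : ℕ) ≠ 0 → (e j : ℕ) ≠ 0 → (e i : ℕ) < (e j : ℕ)

/-- After two nonzero entries, everything is nonzero. -/
def Qb {n : ℕ} (e : InvSeq n) : Prop :=
  ∀ i j k : Fin n, i < j → j < k → (e i : ℕ) ≠ 0 → (e j : ℕ) ≠ 0 → (e k : ℕ) ≠ 0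

def Q {n : ℕ} (e : InvSeq n) : Prop := Qa e ∧ Qb e

instance {n : ℕ} : DecidablePred (Q (n := n)) := fun e => by
  unfold Q Qa Qb; infer_instance

/-- Max value of the sequence. -/
def Mx {n : ℕ} (e : InvSeq n) : ℕ := Finset.univ.sup (fun i => (e i : ℕ))

/-- Number of nonzero entries. -/
def NZ {n : ℕ} (e : InvSeq n) : ℕ :=
  (Finset.univ.filter (fun i => (e i : ℕ) ≠ 0)).card

def FewB {n : ℕ} (e : InvSeq n) : Bool := decide (NZ e ≤ 1)

open Finset

def K (n t : ℕ) : Finset (InvSeq n) :=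
  univ.filter (fun e => Q e ∧ Mx e = t)

def G (n t : ℕ) (b : Bool) : Finset (InvSeq n) :=
  univ.filter (fun e => Q e ∧ Mx e = t ∧ FewB e = b)

def F (n : ℕ) : Finset (InvSeq n) := univ.filter (fun e => Q e)

/-! ### extension/restriction -/

def ext {n : ℕ} (f : InvSeq n) (t : Fin (n + 1)) : InvSeq (n + 1) :=
  fun j => if h : j.1 < n then f ⟨j.1, h⟩ else Fin.cast (by omega) t

def res {n : ℕ} (e : InvSeq (n + 1)) : InvSeq n :=
  fun i => e ⟨i.1, Nat.lt_succ_of_lt i.2⟩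

lemma ext_val_lt {n : ℕ} (f : InvSeq n) (t : Fin (n + 1)) (j : Fin (n + 1))
    (h : j.1 < n) : (ext f t j : ℕ) = (f ⟨j.1, h⟩ : ℕ) := by
  simp [ext, h]

lemma ext_val_last {n : ℕ} (f : InvSeq n) (t : Fin (n + 1)) (j : Fin (n + 1))
    (h : ¬ j.1 < n) : (ext f t j : ℕ) = (t : ℕ) := by
  simp [ext, h]

lemma res_ext {n : ℕ} (f : InvSeq n) (t : Fin (n + 1)) : res (ext f t) = f := by
  funext i
  have h : i.1 < n := i.2
  simp [res, ext, h]

lemma ext_res {n : ℕ} (e : InvSeq (n + 1)) :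
    ext (res e) (e (Fin.last n)) = e := by
  funext j
  by_cases h : j.1 < n
  · simp only [ext, dif_pos h, res]
  · simp only [ext, dif_neg h]
    have hj : j = Fin.last n := Fin.ext (by simp only [Fin.val_last]; omega)
    subst hj
    exact Fin.ext rfl

lemma ext_injective {n : ℕ} (t : Fin (n + 1)) :
    Function.Injective (fun f : InvSeq n => ext f t) := by
  intro f g h
  have := congrArg res h
  simpa [res_ext] using this

/-! ### state lemmas -/

lemma ext_val_castSucc {n : ℕ} (f : InvSeq n) (t : Fin (n + 1)) (i : Fin n) :
    (ext f t (Fin.castSucc i) : ℕ) = (f i : ℕ) := by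
  have h : (Fin.castSucc i).1 < n := i.2
  rw [ext_val_lt _ _ _ h]
  congr 1

lemma ext_val_lastfin {n : ℕ} (f : InvSeq n) (t : Fin (n + 1)) :
    (ext f t (Fin.last n) : ℕ) = (t : ℕ) :=
  ext_val_last _ _ _ (by simp)

lemma Mx_ext {n : ℕ} (f : InvSeq n) (t : Fin (n + 1)) :
    Mx (ext f t) = max (Mx f) (t : ℕ) := by
  apply le_antisymm
  · apply Finset.sup_le
    intro j _
    by_cases h : j.1 < n
    · rw [ext_val_lt _ _ _ h]
      exact le_max_of_le_left (Finset.le_sup (f := fun i => ((f i : ℕ))) (Finset.mem_univ _))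
    · rw [ext_val_last _ _ _ h]
      exact le_max_right _ _
  · apply max_le
    · apply Finset.sup_le
      intro i _
      rw [← ext_val_castSucc f t i]
      exact Finset.le_sup (f := fun i => ((ext f t i : ℕ))) (Finset.mem_univ _)
    · rw [← ext_val_lastfin f t]
      exact Finset.le_sup (f := fun i => ((ext f t i : ℕ))) (Finset.mem_univ _)

lemma NZ_ext {n : ℕ} (f : InvSeq n) (t : Fin (n + 1)) :
    NZ (ext f t) = NZ f + (if (t : ℕ) ≠ 0 then 1 else 0) := by
  unfold NZ
  rw [Finset.card_filter, Finset.card_filter, Fin.sum_univ_castSucc]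
  congr 1
  · exact Finset.sum_congr rfl fun i _ => by rw [ext_val_castSucc]
  · rw [ext_val_lastfin]

lemma NZ_le_one_iff {n : ℕ} (f : InvSeq n) :
    NZ f ≤ 1 ↔ ∀ i j : Fin n, i < j → (f i : ℕ) ≠ 0 → (f j : ℕ) ≠ 0 → False := by
  unfold NZ
  constructor
  · intro h i j hij hi hj
    have h2 : 1 < (Finset.univ.filter (fun i => (f i : ℕ) ≠ 0)).card :=
      Finset.one_lt_card.mpr ⟨i, by simp [hi], j, by simp [hj], ne_of_lt hij⟩
    omega
  · intro h
    by_contra hc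
    push_neg at hc
    obtain ⟨a, ha, b, hb, hab⟩ := Finset.one_lt_card.mp hc
    simp only [Finset.mem_filter, Finset.mem_univ, true_and] at ha hb
    rcases lt_or_gt_of_ne hab with hlt | hgt
    · exact h a b hlt ha hb
    · exact h b a hgt hb ha

lemma Q_ext {n : ℕ} (f : InvSeq n) (t : Fin (n + 1)) :
    Q (ext f t) ↔ Q f ∧ (((t : ℕ) = 0 ∧ NZ f ≤ 1) ∨ ((t : ℕ) ≠ 0 ∧ Mx f < (t : ℕ))) := by
  constructor
  · rintro ⟨qa, qb⟩
    have qaf : Qa f := by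
      intro i j hij hi hj
      have := qa (Fin.castSucc i) (Fin.castSucc j)
        (by simpa [Fin.castSucc_lt_castSucc_iff] using hij)
        (by rwa [ext_val_castSucc]) (by rwa [ext_val_castSucc])
      rwa [ext_val_castSucc, ext_val_castSucc] at this
    have qbf : Qb f := by
      intro i j k hij hjk hi hj
      have := qb (Fin.castSucc i) (Fin.castSucc j) (Fin.castSucc k)
        (by simpa [Fin.castSucc_lt_castSucc_iff] using hij)
        (by simpa [Fin.castSucc_lt_castSucc_iff] using hjk)
        (by rwa [ext_val_castSucc]) (by rwa [ext_val_castSucc])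
      rwa [ext_val_castSucc] at this
    refine ⟨⟨qaf, qbf⟩, ?_⟩
    by_cases ht : (t : ℕ) = 0
    · left
      refine ⟨ht, (NZ_le_one_iff f).2 ?_⟩
      intro i j hij hi hj
      have := qb (Fin.castSucc i) (Fin.castSucc j) (Fin.last n)
        (by simpa [Fin.castSucc_lt_castSucc_iff] using hij)
        (Fin.castSucc_lt_last j)
        (by rwa [ext_val_castSucc]) (by rwa [ext_val_castSucc])
      rw [ext_val_lastfin] at this
      exact this ht
    · right
      refine ⟨ht, ?_⟩
      apply Finset.sup_lt_iff (show (⊥ : ℕ) < (t : ℕ) from Nat.pos_of_ne_zero ht) |>.2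
      intro i _
      by_cases hi : (f i : ℕ) = 0
      · omega
      · have := qa (Fin.castSucc i) (Fin.last n) (Fin.castSucc_lt_last i)
          (by rwa [ext_val_castSucc]) (by rwa [ext_val_lastfin])
        rwa [ext_val_castSucc, ext_val_lastfin] at this
  · rintro ⟨⟨qaf, qbf⟩, hall⟩
    have hlt : ∀ a b : Fin (n + 1), a < b → a.1 < b.1 := fun a b h => h
    constructor
    · intro i j hij hi hj
      by_cases hjn : j.1 < n
      · have hin : i.1 < n := lt_trans (hlt _ _ hij) hjn
        rw [ext_val_lt _ _ _ hin] at hi ⊢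
        rw [ext_val_lt _ _ _ hjn] at hj ⊢
        exact qaf _ _ (show (⟨i.1, hin⟩ : Fin n) < ⟨j.1, hjn⟩ from hlt _ _ hij) hi hj
      · have hin : i.1 < n := by
          have h1 := hlt _ _ hij
          have h2 := j.2
          omega
        rw [ext_val_last _ _ _ hjn] at hj ⊢
        rw [ext_val_lt _ _ _ hin] at hi ⊢
        rcases hall with ⟨h0, _⟩ | ⟨_, hM⟩
        · exact absurd h0 hj
        · exact lt_of_le_of_lt
            (Finset.le_sup (f := fun i => ((f i : ℕ))) (Finset.mem_univ _)) hM
    · intro i j k hij hjk hi hj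
      by_cases hkn : k.1 < n
      · have hjn : j.1 < n := lt_trans (hlt _ _ hjk) hkn
        have hin : i.1 < n := lt_trans (hlt _ _ hij) hjn
        rw [ext_val_lt _ _ _ hin] at hi
        rw [ext_val_lt _ _ _ hjn] at hj
        rw [ext_val_lt _ _ _ hkn]
        exact qbf ⟨i.1, hin⟩ ⟨j.1, hjn⟩ ⟨k.1, hkn⟩ (hlt _ _ hij) (hlt _ _ hjk) hi hj
      · have hjn : j.1 < n := by
          have h1 := hlt _ _ hjk
          have h2 := k.2
          omega
        have hin : i.1 < n := lt_trans (hlt _ _ hij) hjn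
        rw [ext_val_lt _ _ _ hin] at hi
        rw [ext_val_lt _ _ _ hjn] at hj
        rw [ext_val_last _ _ _ hkn]
        rcases hall with ⟨h0, hle⟩ | ⟨ht, _⟩
        · exact absurd ((NZ_le_one_iff f).1 hle ⟨i.1, hin⟩ ⟨j.1, hjn⟩ (hlt _ _ hij) hi hj)
            not_false
        · exact ht

lemma Mx_lt {n : ℕ} (hn : 1 ≤ n) (e : InvSeq n) : Mx e < n := by
  apply Finset.sup_lt_iff (show (⊥ : ℕ) < n from hn) |>.2
  intro i _
  have := (e i).2
  have := i.2
  omega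

lemma Mx_eq_zero_iff {n : ℕ} (e : InvSeq n) : Mx e = 0 ↔ ∀ i, (e i : ℕ) = 0 := by
  rw [Mx, ← Nat.bot_eq_zero, Finset.sup_eq_bot_iff]
  simp [Nat.bot_eq_zero]

lemma NZ_eq_zero_iff {n : ℕ} (e : InvSeq n) : NZ e = 0 ↔ ∀ i, (e i : ℕ) = 0 := by
  simp [NZ, Finset.filter_eq_empty_iff, Finset.card_eq_zero]

lemma Mx_zero_NZ {n : ℕ} (e : InvSeq n) : Mx e = 0 ↔ NZ e = 0 := by
  rw [Mx_eq_zero_iff, NZ_eq_zero_iff]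

/-! ### card recursions -/

lemma G_empty {n t : ℕ} (hn : 1 ≤ n) (h : n ≤ t) (b : Bool) : G n t b = ∅ := by
  rw [Finset.eq_empty_iff_forall_notMem]
  intro e he
  simp only [G, Finset.mem_filter] at he
  have := Mx_lt hn e
  omega

lemma G_zero_false (n : ℕ) : G n 0 false = ∅ := by
  rw [Finset.eq_empty_iff_forall_notMem]
  intro e he
  simp only [G, Finset.mem_filter] at he
  obtain ⟨-, h1, h2, h3⟩ := he
  rw [Mx_zero_NZ] at h2
  simp [FewB, h2] at h3

lemma val_zero_of_one (e : InvSeq 1) (i : Fin 1) : (e i : ℕ) = 0 := by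
  have h1 := (e i).2
  have h2 : i.1 = 0 := by omega
  omega

lemma G_one : G 1 0 true = Finset.univ ∧ (Finset.univ : Finset (InvSeq 1)).card = 1 := by
  constructor
  · rw [Finset.eq_univ_iff_forall]
    intro e
    simp only [G, Finset.mem_filter, Finset.mem_univ, true_and]
    have hz : ∀ i, (e i : ℕ) = 0 := val_zero_of_one e
    refine ⟨⟨fun i j _ h1 _ => absurd (hz i) h1, fun i j k _ _ h1 _ => absurd (hz i) h1⟩,
      (Mx_eq_zero_iff e).2 hz, ?_⟩
    have : NZ e = 0 := (NZ_eq_zero_iff e).2 hz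
    simp [FewB, this]
  · rw [Finset.card_univ]
    rw [Fintype.card_eq_one_iff]
    refine ⟨fun i => ⟨0, by omega⟩, fun e => funext fun i => ?_⟩
    apply Fin.ext
    have := val_zero_of_one e i
    simp [this]

lemma mem_G_ext {n : ℕ} (f : InvSeq n) (t' : Fin (n + 1)) (t : ℕ) (b : Bool) :
    ext f t' ∈ G (n + 1) t b ↔
      Q f ∧ (((t' : ℕ) = 0 ∧ NZ f ≤ 1) ∨ ((t' : ℕ) ≠ 0 ∧ Mx f < (t' : ℕ))) ∧
       max (Mx f) (t' : ℕ) = t ∧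
       decide (NZ f + (if (t' : ℕ) ≠ 0 then 1 else 0) ≤ 1) = b := by
  simp only [G, Finset.mem_filter, Finset.mem_univ, true_and]
  simp only [Q_ext, Mx_ext, FewB, NZ_ext]
  tauto

lemma mem_G {n : ℕ} (f : InvSeq n) (t : ℕ) (b : Bool) :
    f ∈ G n t b ↔ Q f ∧ Mx f = t ∧ FewB f = b := by
  simp [G]

lemma K_split (n M : ℕ) : (K n M).card = (G n M true).card + (G n M false).card := by
  have hT : G n M true = (K n M).filter (fun e => FewB e = true) := by
    simp [G, K, Finset.filter_filter, and_assoc]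
  have hF : G n M false = (K n M).filter (fun e => ¬ (FewB e = true)) := by
    simp only [G, K, Finset.filter_filter, and_assoc, Bool.not_eq_true]
  rw [hT, hF]
  exact (Finset.card_filter_add_card_filter_not (p := fun e => FewB e = true)).symm

lemma trueRec (n t : ℕ) (ht : t ≤ n) :
    (G (n + 1) t true).card
      = (G n t true).card + (if 1 ≤ t then (G n 0 true).card else 0) := by
  by_cases h1 : 1 ≤ t
  · rw [if_pos h1]
    have hdisj : Disjoint ((G n t true).image (fun f => ext f 0))
        ((G n 0 true).image (fun f => ext f ⟨t, by omega⟩)) := by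
      rw [Finset.disjoint_left]
      rintro a ha hb
      obtain ⟨f, hf, rfl⟩ := Finset.mem_image.1 ha
      obtain ⟨g, hg, heq⟩ := Finset.mem_image.1 hb
      have := congrArg (fun e : InvSeq (n + 1) => (e (Fin.last n) : ℕ)) heq
      simp only [ext_val_lastfin] at this
      simp at this
      omega
    have key : G (n + 1) t true
        = (G n t true).image (fun f => ext f 0)
          ∪ (G n 0 true).image (fun f => ext f ⟨t, by omega⟩) := by
      ext e
      simp only [Finset.mem_union, Finset.mem_image]
      constructor
      · intro he
        obtain ⟨f, t', rfl⟩ : ∃ f t', e = ext f t' :=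
          ⟨res e, e (Fin.last n), (ext_res e).symm⟩
        rw [mem_G_ext] at he
        obtain ⟨hq, hall, hmx, hfb⟩ := he
        rcases hall with ⟨h0, hle⟩ | ⟨hne, hMt⟩
        · left
          refine ⟨f, ?_, ?_⟩
          · rw [mem_G]
            refine ⟨hq, ?_, ?_⟩
            · rw [h0, Nat.max_zero] at hmx; exact hmx
            · simp [FewB, hle]
          · have : t' = 0 := Fin.ext (by simpa using h0)
            rw [this]
        · right
          have hmxt : (t' : ℕ) = t := by
            rw [max_eq_right (le_of_lt hMt)] at hmx; exact hmx
          have hNZ : NZ f = 0 := by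
            rw [if_pos hne] at hfb
            have := of_decide_eq_true hfb
            omega
          refine ⟨f, ?_, ?_⟩
          · rw [mem_G]
            refine ⟨hq, ?_, ?_⟩
            · rw [Mx_zero_NZ]; exact hNZ
            · simp [FewB, hNZ]
          · have ht2 : t' = ⟨t, by omega⟩ := Fin.ext hmxt
            rw [ht2]
      · rintro (⟨f, hf, rfl⟩ | ⟨f, hf, rfl⟩)
        · rw [mem_G] at hf
          obtain ⟨hq, hmx, hfb⟩ := hf
          have hle : NZ f ≤ 1 := by simpa [FewB] using hfb
          rw [mem_G_ext]
          refine ⟨hq, Or.inl ⟨by simp, hle⟩, by simp [hmx], by simp [hle]⟩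
        · rw [mem_G] at hf
          obtain ⟨hq, hmx, hfb⟩ := hf
          have hNZ : NZ f = 0 := by rw [← Mx_zero_NZ]; exact hmx
          rw [mem_G_ext]
          have htv : ((⟨t, by omega⟩ : Fin (n + 1)) : ℕ) = t := rfl
          refine ⟨hq, Or.inr ⟨by rw [htv]; omega, by rw [htv, hmx]; omega⟩, ?_, ?_⟩
          · rw [htv, hmx]; omega
          · rw [htv, if_pos (show t ≠ 0 by omega), hNZ]
            decide
    rw [key, Finset.card_union_of_disjoint hdisj,
      Finset.card_image_of_injective _ (ext_injective _),
      Finset.card_image_of_injective _ (ext_injective _)]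
  · have ht0 : t = 0 := by omega
    subst ht0
    rw [if_neg h1, Nat.add_zero]
    have key : G (n + 1) 0 true = (G n 0 true).image (fun f => ext f 0) := by
      ext e
      simp only [Finset.mem_image]
      constructor
      · intro he
        obtain ⟨f, t', rfl⟩ : ∃ f t', e = ext f t' :=
          ⟨res e, e (Fin.last n), (ext_res e).symm⟩
        rw [mem_G_ext] at he
        obtain ⟨hq, hall, hmx, hfb⟩ := he
        rcases hall with ⟨h0, hle⟩ | ⟨hne, hMt⟩
        · refine ⟨f, ?_, ?_⟩
          · rw [mem_G]
            refine ⟨hq, ?_, by simp [FewB, hle]⟩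
            rw [h0, Nat.max_zero] at hmx; exact hmx
          · have : t' = 0 := Fin.ext (by simpa using h0)
            rw [this]
        · exfalso; omega
      · rintro ⟨f, hf, rfl⟩
        rw [mem_G] at hf
        obtain ⟨hq, hmx, hfb⟩ := hf
        have hle : NZ f ≤ 1 := by simpa [FewB] using hfb
        rw [mem_G_ext]
        exact ⟨hq, Or.inl ⟨by simp, hle⟩, by simp [hmx], by simp [hle]⟩
    rw [key, Finset.card_image_of_injective _ (ext_injective _)]
    omega

lemma falseRec (n t : ℕ) (h1 : 1 ≤ t) (h2 : t ≤ n) :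
    (G (n + 1) t false).card
      = ∑ M ∈ Finset.Ico 1 t, ((G n M true).card + (G n M false).card) := by
  have htv : ((⟨t, by omega⟩ : Fin (n + 1)) : ℕ) = t := rfl
  have key : G (n + 1) t false
      = (Finset.univ.filter (fun f : InvSeq n => Q f ∧ 1 ≤ Mx f ∧ Mx f < t)).image
          (fun f => ext f ⟨t, by omega⟩) := by
    ext e
    simp only [Finset.mem_image, Finset.mem_filter, Finset.mem_univ, true_and]
    constructor
    · intro he
      obtain ⟨f, t', rfl⟩ : ∃ f t', e = ext f t' :=
        ⟨res e, e (Fin.last n), (ext_res e).symm⟩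
      rw [mem_G_ext] at he
      obtain ⟨hq, hall, hmx, hfb⟩ := he
      rcases hall with ⟨h0, hle⟩ | ⟨hne, hMt⟩
      · exfalso
        rw [if_neg (by omega)] at hfb
        have := of_decide_eq_false hfb
        omega
      · have hmxt : (t' : ℕ) = t := by
          rw [max_eq_right (le_of_lt hMt)] at hmx; exact hmx
        rw [if_pos hne] at hfb
        have hNZ : ¬ (NZ f + 1 ≤ 1) := of_decide_eq_false hfb
        have hMx1 : 1 ≤ Mx f := by
          rcases Nat.eq_zero_or_pos (Mx f) with h | h
          · exfalso
            have : NZ f = 0 := by rw [← Mx_zero_NZ]; exact h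
            omega
          · exact h
        refine ⟨f, ⟨hq, hMx1, by omega⟩, ?_⟩
        have ht2 : t' = ⟨t, by omega⟩ := Fin.ext hmxt
        rw [ht2]
    · rintro ⟨f, ⟨hq, h1f, h2f⟩, rfl⟩
      rw [mem_G_ext]
      have hNZ1 : 1 ≤ NZ f := by
        rcases Nat.eq_zero_or_pos (NZ f) with h | h
        · exfalso
          have : Mx f = 0 := (Mx_zero_NZ f).2 h
          omega
        · exact h
      refine ⟨hq, Or.inr ⟨by rw [htv]; omega, by rw [htv]; omega⟩, ?_, ?_⟩
      · rw [htv]; omega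
      · rw [htv, if_pos (show t ≠ 0 by omega), decide_eq_false_iff_not]
        omega
  rw [key, Finset.card_image_of_injective _ (ext_injective _)]
  rw [Finset.card_eq_sum_card_fiberwise
    (f := fun f => Mx f) (t := Finset.Ico 1 t)
    (fun f hf => by
      simp only [Finset.mem_coe, Finset.mem_filter] at hf
      simp only [Finset.mem_coe, Finset.mem_Ico]
      exact ⟨hf.2.2.1, hf.2.2.2⟩)]
  apply Finset.sum_congr rfl
  intro M hM
  rw [Finset.mem_Ico] at hM
  rw [← K_split]
  congr 1
  ext f
  simp only [K, Finset.filter_filter, Finset.mem_filter, Finset.mem_univ, true_and]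
  constructor
  · rintro ⟨⟨hq, -, -⟩, hm⟩
    exact ⟨hq, hm⟩
  · rintro ⟨hq, hm⟩
    exact ⟨⟨hq, by omega, by omega⟩, hm⟩

/-! ### closed forms -/

def At (n t : ℕ) : ℕ := if t = 0 then 1 else if t < n then n - t else 0

def Bt (n t : ℕ) : ℕ :=
  if 2 ≤ t ∧ t < n then (2 ^ (t - 1) - 1) * (n - 1 - t) + (t - 1) * 2 ^ (t - 2) else 0

lemma step_arith (n t : ℕ) (h : 2 ≤ t) (h2 : t + 1 ≤ n) :
    ((2 ^ (t - 1) - 1) * (n - t) + (t - 1) * 2 ^ (t - 2))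
      + ((n - t) + ((2 ^ (t - 1) - 1) * (n - 1 - t) + (t - 1) * 2 ^ (t - 2)))
      = (2 ^ (t + 1 - 1) - 1) * (n - (t + 1)) + (t + 1 - 1) * 2 ^ (t + 1 - 2) := by
  obtain ⟨c, rfl⟩ : ∃ c, t = c + 2 := ⟨t - 2, by omega⟩
  obtain ⟨b, rfl⟩ : ∃ b, n = c + 3 + b := ⟨n - (c + 3), by omega⟩
  obtain ⟨a, ha⟩ : ∃ a, 2 ^ c = a + 1 := ⟨2 ^ c - 1, by
    have : 1 ≤ 2 ^ c := Nat.one_le_two_pow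
    omega⟩
  have p1 : 2 ^ (c + 1) = 2 * a + 2 := by rw [pow_succ, ha]; ring
  have p2 : 2 ^ (c + 2) = 4 * a + 4 := by rw [pow_succ, p1]; ring
  simp only [show c + 2 - 1 = c + 1 by omega, show c + 2 - 2 = c by omega,
    show c + 2 + 1 - 1 = c + 2 by omega, show c + 2 + 1 - 2 = c + 1 by omega,
    show c + 3 + b - (c + 2) = b + 1 by omega, show c + 3 + b - 1 - (c + 2) = b by omega,
    show c + 3 + b - (c + 2 + 1) = b by omega]
  rw [p1, p2, ha]
  rw [show 2 * a + 2 - 1 = 2 * a + 1 by omega, show 4 * a + 4 - 1 = 4 * a + 3 by omega]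
  ring

lemma sumAB (n t : ℕ) (h1 : 1 ≤ t) (h2 : t ≤ n) :
    ∑ M ∈ Finset.Ico 1 t, (At n M + Bt n M)
      = (2 ^ (t - 1) - 1) * (n - t) + (t - 1) * 2 ^ (t - 2) := by
  induction t with
  | zero => omega
  | succ t ih =>
    rcases Nat.eq_zero_or_pos t with rfl | hpos
    · norm_num
    · rw [Finset.sum_Ico_succ_top (by omega), ih hpos (by omega)]
      rcases Nat.lt_or_ge t 2 with hlt | hge
      · have ht1 : t = 1 := by omega
        subst ht1
        have hAt : At n 1 = n - 1 := by
          rw [At, if_neg (by omega), if_pos (by omega)]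
        have hBt : Bt n 1 = 0 := by
          rw [Bt, if_neg (by omega)]
        rw [hAt, hBt]
        norm_num
        omega
      · have hAt : At n t = n - t := by
          rw [At, if_neg (by omega), if_pos (by omega)]
        have hBt : Bt n t = (2 ^ (t - 1) - 1) * (n - 1 - t) + (t - 1) * 2 ^ (t - 2) := by
          rw [Bt, if_pos ⟨hge, by omega⟩]
        rw [hAt, hBt, ← step_arith n t hge h2]

lemma closedForm : ∀ n, 1 ≤ n → ∀ t b, (G n t b).card = (if b then At n t else Bt n t) := by
  intro n
  induction n with
  | zero => omega
  | succ n ih =>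
    intro _ t b
    rcases Nat.eq_zero_or_pos n with rfl | hn1
    · cases b
      · simp only [if_neg Bool.false_ne_true, Bool.false_eq_true, if_false]
        rcases Nat.eq_zero_or_pos t with rfl | ht
        · rw [G_zero_false, Bt, if_neg (by omega)]
          simp
        · rw [G_empty (by omega) (by omega), Bt, if_neg (by omega)]
          simp
      · simp only [if_pos rfl, if_true]
        rcases Nat.eq_zero_or_pos t with rfl | ht
        · rw [G_one.1, G_one.2, At, if_pos rfl]
        · rw [G_empty (by omega) (by omega), At, if_neg (by omega), if_neg (by omega)]
          simp
    · cases b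
      · simp only [Bool.false_eq_true, if_false]
        rcases Nat.eq_zero_or_pos t with rfl | ht
        · rw [G_zero_false, Bt, if_neg (by omega)]
          simp
        · by_cases htn : t ≤ n
          · rw [falseRec n t ht htn]
            rw [Finset.sum_congr rfl (fun M _ => by
              rw [ih hn1 M true, ih hn1 M false, if_pos rfl, if_neg (by simp)])]
            rw [sumAB n t ht htn]
            rcases Nat.lt_or_ge t 2 with hlt | hge
            · have ht1 : t = 1 := by omega
              subst ht1
              rw [Bt, if_neg (by omega)]
              norm_num
            · rw [Bt, if_pos ⟨hge, by omega⟩, show n + 1 - 1 - t = n - t by omega]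
          · rw [G_empty (by omega) (by omega), Bt, if_neg (by omega)]
            simp
      · simp only [if_true]
        by_cases htn : t ≤ n
        · rw [trueRec n t htn, ih hn1 t true, ih hn1 0 true,
            if_pos rfl, if_pos rfl]
          unfold At
          split_ifs <;> omega
        · rw [G_empty (by omega) (by omega), At, if_neg (by omega), if_neg (by omega)]
          simp

/-! ### assembly -/

lemma F_card (n : ℕ) (hn : 1 ≤ n) : (F n).card = (n - 1) * 2 ^ (n - 2) + 1 := by
  rw [Finset.card_eq_sum_card_fiberwise
    (f := fun e => Mx e) (t := Finset.range n)
    (fun e _ => Finset.mem_range.2 (Mx_lt hn e))]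
  have hfib : ∀ t, (F n).filter (fun e => Mx e = t) = K n t := by
    intro t
    ext e
    simp [F, K, Finset.filter_filter]
  rw [Finset.sum_congr rfl (fun t _ => by
    rw [hfib t, K_split, closedForm n hn t true, closedForm n hn t false,
      if_pos rfl, if_neg (by simp)])]
  rw [Finset.range_eq_Ico, ← Finset.sum_Ico_consecutive _ (show 0 ≤ 1 by omega) hn]
  rw [show Finset.Ico 0 1 = {0} from rfl]
  rw [Finset.sum_singleton, sumAB n n hn le_rfl]
  have hA0 : At n 0 = 1 := by rw [At, if_pos rfl]
  have hB0 : Bt n 0 = 0 := by rw [Bt, if_neg (by omega)]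
  rw [hA0, hB0, Nat.sub_self, Nat.mul_zero, Nat.zero_add]
  omega

lemma P_iff_Q {n : ℕ} (hn : 1 ≤ n) (e : InvSeq n) :
    (¬ ∃ i j k : Fin n, i < j ∧ j < k ∧
      (e i : ℕ) ≤ (e j : ℕ) ∧ (e k : ℕ) ≤ (e j : ℕ) ∧ (e i : ℕ) ≠ (e k : ℕ)) ↔ Q e := by
  have hlt : ∀ a b : Fin n, a.1 < b.1 → a < b := fun a b h => h
  constructor
  · intro hP
    have qa : Qa e := by
      intro i j hij hi hj
      by_contra hc
      push_neg at hc
      have h0 : (0 : ℕ) < n := hn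
      have h2 : (e ⟨0, h0⟩ : ℕ) < 0 + 1 := (e ⟨0, h0⟩).2
      have hz : (e (⟨0, h0⟩ : Fin n) : ℕ) = 0 := by omega
      have hiv : (e i : ℕ) < i.1 + 1 := (e i).2
      have hzi : (⟨0, h0⟩ : Fin n) < i := by
        apply hlt
        show 0 < i.1
        omega
      exact hP ⟨⟨0, h0⟩, i, j, hzi, hij, by omega, hc, by omega⟩
    refine ⟨qa, ?_⟩
    intro i j k hij hjk hi hj
    by_contra hk
    have hk0 : (e k : ℕ) = 0 := by omega
    exact hP ⟨i, j, k, hij, hjk, le_of_lt (qa i j hij hi hj), by omega, by omega⟩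

  · rintro ⟨qa, qb⟩ ⟨i, j, k, hij, hjk, h1, h2, h3⟩
    by_cases hi : (e i : ℕ) = 0
    · have hk : (e k : ℕ) ≠ 0 := by omega
      have hj : (e j : ℕ) ≠ 0 := by omega
      have := qa j k hjk hj hk
      omega
    · have hj : (e j : ℕ) ≠ 0 := by omega
      have hk := qb i j k hij hjk hi hj
      have ha := qa i j hij hi hj
      have hb := qa j k hjk hj hk
      omega

end Inv16

theorem stmt16 (n : ℕ) (hn : 1 ≤ n) :
    Nat.card {e : InvSeq n // ¬ ∃ i j k : Fin n, i < j ∧ j < k ∧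
      (e i : ℕ) ≤ (e j : ℕ) ∧ (e k : ℕ) ≤ (e j : ℕ) ∧ (e i : ℕ) ≠ (e k : ℕ)} =
    (n - 1) * 2 ^ (n - 2) + 1 := by
  classical
  have h1 : Nat.card {e : InvSeq n // ¬ ∃ i j k : Fin n, i < j ∧ j < k ∧
      (e i : ℕ) ≤ (e j : ℕ) ∧ (e k : ℕ) ≤ (e j : ℕ) ∧ (e i : ℕ) ≠ (e k : ℕ)}
      = Nat.card {e : InvSeq n // Inv16.Q e} :=
    Nat.card_congr (Equiv.subtypeEquivRight (fun e => Inv16.P_iff_Q hn e))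
  rw [h1, Nat.card_eq_fintype_card, Fintype.card_subtype]
  exact Inv16.F_card n hn
end

section
/- The number of inversion sequences of length n ≥ 1 with no indices i < j < k such that e_j > e_k equals the Catalan number C_n = (1/(n+1))·C(2n,n). Equivalently, the number of weakly increasing inversion sequences of length n is C_n. -/
/-- Monotone "subdiagonal" sequences of length `n`, padded by `0` beyond `n`. -/
def MSeq (n : ℕ) : Type :=
  {f : ℕ → ℕ // (∀ i, f i ≤ i) ∧ (∀ i j, i ≤ j → j < n → f i ≤ f j) ∧ ∀ i, n ≤ i → f i = 0}

instance MSeq.finite (n : ℕ) : Finite (MSeq n) := by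
  have : Function.Injective (fun f : MSeq n => (fun i : Fin n => (⟨f.1 i.1, by
      have := f.2.1 i.1; omega⟩ : Fin n)) ) := by
    intro f g h
    apply Subtype.ext
    funext i
    by_cases hi : i < n
    · exact congrArg Fin.val (congrFun h ⟨i, hi⟩)
    · rw [f.2.2.2 i (by omega), g.2.2.2 i (by omega)]
  exact Finite.of_injective _ this

lemma mseq_zero {n : ℕ} (e : MSeq n) : e.1 0 = 0 := Nat.le_zero.mp (e.2.1 0)

/-- The first-return predicate. -/
def FretP (n : ℕ) (e : MSeq (n + 1)) (m : ℕ) : Prop := m = n ∨ e.1 (m + 1) = m + 1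

instance {n : ℕ} {e : MSeq (n+1)} : DecidablePred (FretP n e) := fun m => by
  unfold FretP; infer_instance

lemma fretP_ex {n : ℕ} (e : MSeq (n+1)) : ∃ m, FretP n e m := ⟨n, Or.inl rfl⟩

/-- One less than the first return position. -/
def fret {n : ℕ} (e : MSeq (n+1)) : ℕ := Nat.find (fretP_ex e)

lemma fret_le {n : ℕ} (e : MSeq (n+1)) : fret e ≤ n := Nat.find_le (Or.inl rfl)

lemma fret_lt {n : ℕ} (e : MSeq (n+1)) {m : ℕ} (h : m < fret e) : e.1 (m + 1) ≤ m := by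
  have h1 := Nat.find_min (fretP_ex e) h
  unfold FretP at h1
  push_neg at h1
  have := e.2.1 (m + 1)
  omega

lemma fret_spec {n : ℕ} (e : MSeq (n+1)) (h : fret e < n) : e.1 (fret e + 1) = fret e + 1 := by
  have h1 : FretP n e (fret e) := Nat.find_spec (fretP_ex e)
  rcases h1 with h1 | h1
  · omega
  · exact h1

lemma fret_eq_of {n : ℕ} (e : MSeq (n+1)) {k : ℕ} (hk : k ≤ n)
    (h1 : k < n → e.1 (k + 1) = k + 1) (h2 : ∀ m, m < k → e.1 (m + 1) ≤ m) :
    fret e = k := by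
  have hle : fret e ≤ k := by
    rcases Nat.eq_or_lt_of_le hk with h | h
    · subst h; exact fret_le e
    · exact Nat.find_le (Or.inr (h1 h))
  rcases Nat.eq_or_lt_of_le hle with h | h
  · exact h
  · exfalso
    have hs : FretP n e (fret e) := Nat.find_spec (fretP_ex e)
    have := h2 (fret e) h
    rcases hs with hs | hs <;> omega

/-- The concatenation construction. -/
def msC (n k : ℕ) (a b : ℕ → ℕ) : ℕ → ℕ := fun i =>
  if i = 0 then 0 else if i ≤ k then a (i - 1)
  else if i ≤ n then (k + 1) + b (i - (k + 1)) else 0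

def msCm {n k : ℕ} (hk : k ≤ n) (a : MSeq k) (b : MSeq (n - k)) : MSeq (n + 1) := by
  refine ⟨msC n k a.1 b.1, ?_, ?_, ?_⟩
  · intro i
    unfold msC
    rcases Nat.eq_zero_or_pos i with h0 | h0
    · simp [h0]
    rw [if_neg (by omega)]
    by_cases h1 : i ≤ k
    · rw [if_pos h1]
      have := a.2.1 (i - 1); omega
    rw [if_neg h1]
    by_cases h2 : i ≤ n
    · rw [if_pos h2]
      have := b.2.1 (i - (k + 1)); omega
    · rw [if_neg h2]; omega
  · intro i j hij hj
    unfold msC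
    rcases Nat.eq_zero_or_pos i with h0 | h0
    · simp [h0]
    rw [if_neg (show ¬ i = 0 by omega), if_neg (show ¬ j = 0 by omega)]
    by_cases h1 : j ≤ k
    · rw [if_pos h1, if_pos (show i ≤ k by omega)]
      exact a.2.2.1 (i - 1) (j - 1) (by omega) (by omega)
    · rw [if_neg h1, if_pos (show j ≤ n by omega)]
      by_cases h2 : i ≤ k
      · rw [if_pos h2]
        have := a.2.1 (i - 1); omega
      · rw [if_neg h2, if_pos (show i ≤ n by omega)]
        have := b.2.2.1 (i - (k + 1)) (j - (k + 1)) (by omega) (by omega)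
        omega
  · intro i hi
    unfold msC
    rw [if_neg (by omega), if_neg (by omega), if_neg (by omega)]

lemma fret_msCm {n k : ℕ} (hk : k ≤ n) (a : MSeq k) (b : MSeq (n - k)) :
    fret (msCm hk a b) = k := by
  apply fret_eq_of
  · exact hk
  · intro hkn
    show msC n k a.1 b.1 (k + 1) = k + 1
    unfold msC
    have h0 : b.1 0 = 0 := Nat.le_zero.mp (b.2.1 0)
    rw [if_neg (show ¬ k + 1 = 0 by omega), if_neg (show ¬ k + 1 ≤ k by omega),
      if_pos (show k + 1 ≤ n by omega), Nat.sub_self, h0]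
  · intro m hm
    show msC n k a.1 b.1 (m + 1) ≤ m
    unfold msC
    rw [if_neg (show ¬ m + 1 = 0 by omega), if_pos (show m + 1 ≤ k by omega), Nat.add_sub_cancel]
    have := a.2.1 m; omega

/-- First-return decomposition at a fixed `k`. -/
def msDk {n k : ℕ} (hk : k ≤ n) :
    {e : MSeq (n + 1) // fret e = k} ≃ MSeq k × MSeq (n - k) where
  toFun x :=
    ⟨⟨fun i => if i < k then x.1.1 (i + 1) else 0, by
        intro i
        beta_reduce
        by_cases hi : i < k
        · rw [if_pos hi]
          rw [← x.2] at hi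
          exact fret_lt x.1 hi
        · rw [if_neg hi]; omega, by
        intro i j hij hj
        beta_reduce
        rw [if_pos hj, if_pos (show i < k by omega)]
        exact x.1.2.2.1 (i + 1) (j + 1) (by omega) (by omega), by
        intro i hi
        beta_reduce
        rw [if_neg (by omega)]⟩,
     ⟨fun i => if i < n - k then x.1.1 (k + 1 + i) - (k + 1) else 0, by
        intro i
        beta_reduce
        by_cases hi : i < n - k
        · rw [if_pos hi]
          have := x.1.2.1 (k + 1 + i); omega
        · rw [if_neg hi]; omega, by
        intro i j hij hj
        beta_reduce
        rw [if_pos hj, if_pos (show i < n - k by omega)]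
        have := x.1.2.2.1 (k + 1 + i) (k + 1 + j) (by omega) (by omega)
        omega, by
        intro i hi
        beta_reduce
        rw [if_neg (by omega)]⟩⟩
  invFun y := ⟨msCm hk y.1 y.2, fret_msCm hk y.1 y.2⟩
  left_inv x := by
    obtain ⟨e, he⟩ := x
    apply Subtype.ext
    apply Subtype.ext
    funext i
    show msC n k (fun i => if i < k then e.1 (i + 1) else 0)
      (fun i => if i < n - k then e.1 (k + 1 + i) - (k + 1) else 0) i = e.1 i
    unfold msC
    beta_reduce
    rcases Nat.eq_zero_or_pos i with h0 | h0
    · subst h0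
      rw [if_pos rfl, mseq_zero e]
    rw [if_neg (by omega)]
    by_cases h1 : i ≤ k
    · rw [if_pos h1, if_pos (show i - 1 < k by omega)]
      have h3 : i - 1 + 1 = i := by omega
      rw [h3]
    rw [if_neg h1]
    by_cases h2 : i ≤ n
    · have hkn : k < n := by omega
      have hek : e.1 (k + 1) = k + 1 := by rw [← he] at hkn ⊢; exact fret_spec e hkn
      have hmono : e.1 (k + 1) ≤ e.1 i := e.2.2.1 (k + 1) i (by omega) (by omega)
      rw [if_pos h2, if_pos (show i - (k + 1) < n - k by omega)]
      have h3 : k + 1 + (i - (k + 1)) = i := by omega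
      rw [h3]
      omega
    · rw [if_neg h2]
      exact (e.2.2.2 i (by omega)).symm
  right_inv y := by
    obtain ⟨a, b⟩ := y
    refine Prod.ext ?_ ?_ <;> apply Subtype.ext <;> funext i
    · show (if i < k then msC n k a.1 b.1 (i + 1) else 0) = a.1 i
      by_cases hi : i < k
      · rw [if_pos hi]
        unfold msC
        rw [if_neg (show ¬ i + 1 = 0 by omega), if_pos (show i + 1 ≤ k by omega),
          Nat.add_sub_cancel]
      · rw [if_neg hi]
        exact (a.2.2.2 i (by omega)).symm
    · show (if i < n - k then msC n k a.1 b.1 (k + 1 + i) - (k + 1) else 0) = b.1 i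
      by_cases hi : i < n - k
      · rw [if_pos hi]
        unfold msC
        rw [if_neg (show ¬ k + 1 + i = 0 by omega), if_neg (show ¬ k + 1 + i ≤ k by omega),
          if_pos (show k + 1 + i ≤ n by omega)]
        have h3 : k + 1 + i - (k + 1) = i := by omega
        rw [h3]
        omega
      · rw [if_neg hi]
        exact (b.2.2.2 i (by omega)).symm

lemma nat_card_sigma {ι : Type*} [Fintype ι] {α : ι → Type*} [∀ i, Finite (α i)] :
    Nat.card (Σ i, α i) = ∑ i, Nat.card (α i) := by
  letI : ∀ i, Fintype (α i) := fun i => Fintype.ofFinite _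
  simp [Nat.card_eq_fintype_card]

lemma card_MSeq : ∀ n, Nat.card (MSeq n) = catalan n := by
  intro n
  induction n using Nat.strong_induction_on with
  | _ n ih =>
    match n with
    | 0 =>
      have : Unique (MSeq 0) := {
        default := ⟨fun _ => 0, fun i => Nat.zero_le i, fun i j _ _ => le_refl 0,
          fun i _ => rfl⟩
        uniq := by
          rintro ⟨f, hf⟩
          apply Subtype.ext
          funext i
          exact hf.2.2 i (Nat.zero_le i) }
      simp [Nat.card_unique, catalan_zero]
    | (m + 1) =>
      have hsig : Nat.card (MSeq (m + 1)) =
          ∑ k : Fin (m + 1), Nat.card {e : MSeq (m + 1) // fret e = k.1} := by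
        let f : MSeq (m + 1) → Fin (m + 1) := fun e => ⟨fret e, by have := fret_le e; omega⟩
        rw [← Nat.card_congr (Equiv.sigmaFiberEquiv f), nat_card_sigma]
        apply Finset.sum_congr rfl
        intro k _
        apply Nat.card_congr
        apply Equiv.subtypeEquivRight
        intro e
        simp [f, Fin.ext_iff]
      rw [hsig, catalan_succ]
      apply Finset.sum_congr rfl
      intro k _
      rw [Nat.card_congr (msDk (show k.1 ≤ m by omega)), Nat.card_prod,
        ih k.1 (by omega), ih (m - k.1) (by omega)]

/-- Monotone inversion sequences are the same as `MSeq n`. -/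
def invSeqEquiv (n : ℕ) :
    {e : InvSeq n // ∀ i j : Fin n, i ≤ j → (e i : ℕ) ≤ (e j : ℕ)} ≃ MSeq n where
  toFun e := ⟨fun i => if h : i < n then (e.1 ⟨i, h⟩ : ℕ) else 0, by
      intro i
      beta_reduce
      by_cases h : i < n
      · rw [dif_pos h]
        exact Nat.lt_succ_iff.mp (e.1 ⟨i, h⟩).2
      · rw [dif_neg h]; omega, by
      intro i j hij hj
      beta_reduce
      rw [dif_pos hj, dif_pos (show i < n by omega)]
      exact e.2 ⟨i, by omega⟩ ⟨j, hj⟩ hij, by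
      intro i hi
      beta_reduce
      rw [dif_neg (by omega)]⟩
  invFun f := ⟨fun i => ⟨f.1 i.1, by have := f.2.1 i.1; omega⟩, by
      intro i j hij
      exact f.2.2.1 i.1 j.1 hij j.2⟩
  left_inv e := by
    apply Subtype.ext
    funext i
    apply Fin.ext
    simp
  right_inv f := by
    apply Subtype.ext
    funext i
    show dite (i < n) (fun _ => f.1 i) (fun _ => 0) = f.1 i
    by_cases h : i < n
    · rw [dif_pos h]
    · rw [dif_neg h]
      exact (f.2.2.2 i (by omega)).symm

theorem stmt17 (n : ℕ) (hn : 1 ≤ n) :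
    Nat.card {e : InvSeq n // ¬ ∃ i j k : Fin n, i < j ∧ j < k ∧
      (e k : ℕ) < (e j : ℕ)} = catalan n ∧
    Nat.card {e : InvSeq n // ∀ i j : Fin n, i ≤ j → (e i : ℕ) ≤ (e j : ℕ)} =
      catalan n := by
  have hiff : ∀ e : InvSeq n, (¬ ∃ i j k : Fin n, i < j ∧ j < k ∧
      (e k : ℕ) < (e j : ℕ)) ↔ (∀ i j : Fin n, i ≤ j → (e i : ℕ) ≤ (e j : ℕ)) := by
    intro e
    constructor
    · intro hno i j hij
      rcases eq_or_lt_of_le hij with h | h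
      · subst h; exact le_refl _
      by_contra hlt
      push_neg at hlt
      rcases Nat.eq_zero_or_pos i.1 with h0 | h0
      · have h1 : (e i : ℕ) < i.1 + 1 := (e i).2
        omega
      · refine hno ⟨⟨i.1 - 1, by omega⟩, i, j, ?_, h, hlt⟩
        rw [Fin.lt_def]
        show i.1 - 1 < i.1
        omega
    · rintro hmono ⟨i, j, k, hij, hjk, hlt⟩
      exact absurd (hmono j k (le_of_lt hjk)) (by omega)
  constructor
  · rw [Nat.card_congr ((Equiv.subtypeEquivRight hiff).trans (invSeqEquiv n)), card_MSeq]
  · rw [Nat.card_congr (invSeqEquiv n), card_MSeq]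
end

section
/- For 1 ≤ k ≤ n, the number of inversion sequences of length n with no indices i < j < k satisfying e_i ≠ e_j = e_k and having exactly k distinct values equals (n+1-k)^k - (n-k)^k. -/
open Finset

/-- peel off the last coordinate -/
def peel (m c : ℕ) : (∀ j : Fin (m+1), Fin (c + j.1 + 1)) ≃
    ((∀ j : Fin m, Fin (c + j.1 + 1)) × Fin (c + m + 1)) where
  toFun g := (fun j => g j.castSucc, g (Fin.last m))
  invFun p := fun j => if h : j.1 < m then p.1 ⟨j.1, h⟩ else
    Fin.cast (by have := j.isLt; omega) p.2
  left_inv g := by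
    funext j
    by_cases h : j.1 < m
    · simp only [dif_pos h]
      have h2 : (⟨j.1, h⟩ : Fin m).castSucc = j := by ext; simp
      apply Fin.ext
      exact congrArg (fun t => ((g t : ℕ))) h2
    · simp only [dif_neg h]
      have hj : j = Fin.last m := by ext; have := j.isLt; simp [Fin.last]; omega
      subst hj
      apply Fin.ext
      simp
  right_inv p := by
    refine Prod.ext ?_ ?_
    · funext j
      show (if h : (j.castSucc).1 < m then p.1 ⟨(j.castSucc).1, h⟩ else _) = p.1 j
      rw [dif_pos (show (j.castSucc).1 < m from j.isLt)]
      apply Fin.ext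
      exact congrArg (fun t => ((p.1 t : ℕ))) (by ext; simp : (⟨(j.castSucc).1, j.isLt⟩ : Fin m) = j)
    · show (if h : (Fin.last m).1 < m then _ else Fin.cast _ p.2) = p.2
      rw [dif_neg (by simp)]
      apply Fin.ext
      simp

def Bc (m c : ℕ) (g : ∀ j : Fin m, Fin (c + j.1 + 1)) : Prop :=
  (∀ j, (g j : ℕ) ≠ 0) ∧ ∀ j1 j2 : Fin m, (g j1 : ℕ) = (g j2 : ℕ) → j1 = j2

def Ac (m c : ℕ) (g : ∀ j : Fin m, Fin (c + j.1 + 1)) : Prop :=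
  (∃! j, (g j : ℕ) = 0) ∧
    ∀ j1 j2 : Fin m, (g j1 : ℕ) ≠ 0 → (g j1 : ℕ) = (g j2 : ℕ) → j1 = j2

lemma peel_symm_castSucc (m c : ℕ) (g' : ∀ j : Fin m, Fin (c + j.1 + 1))
    (x : Fin (c + m + 1)) (j : Fin m) :
    (((peel m c).symm (g', x)) j.castSucc : ℕ) = (g' j : ℕ) := by
  simp only [peel, Equiv.coe_fn_symm_mk]
  rw [dif_pos (show (j.castSucc).1 < m from j.isLt)]
  exact congrArg (fun t => ((g' t : ℕ))) (by ext; simp : (⟨(j.castSucc).1, j.isLt⟩ : Fin m) = j)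

lemma peel_symm_last (m c : ℕ) (g' : ∀ j : Fin m, Fin (c + j.1 + 1))
    (x : Fin (c + m + 1)) :
    (((peel m c).symm (g', x)) (Fin.last m) : ℕ) = (x : ℕ) := by
  simp only [peel, Equiv.coe_fn_symm_mk]
  rw [dif_neg (by simp)]
  simp

lemma Bc_peel (m c : ℕ) (g' : ∀ j : Fin m, Fin (c + j.1 + 1)) (x : Fin (c + m + 1)) :
    Bc (m+1) c ((peel m c).symm (g', x)) ↔
      Bc m c g' ∧ (x : ℕ) ≠ 0 ∧ ∀ j, (x : ℕ) ≠ (g' j : ℕ) := by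
  set e := (peel m c).symm (g', x) with he
  constructor
  · rintro ⟨hnz, hinj⟩
    refine ⟨⟨fun j => ?_, fun j1 j2 hval => ?_⟩, ?_, fun j hval => ?_⟩
    · have := hnz j.castSucc; rwa [peel_symm_castSucc] at this
    · have : (e j1.castSucc : ℕ) = (e j2.castSucc : ℕ) := by
        rw [peel_symm_castSucc, peel_symm_castSucc]; exact hval
      have := hinj _ _ this
      exact Fin.castSucc_injective m this
    · have := hnz (Fin.last m); rwa [peel_symm_last] at this
    · have h1 : (e (Fin.last m) : ℕ) = (e j.castSucc : ℕ) := by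
        rw [peel_symm_last, peel_symm_castSucc]; exact hval
      have := hinj _ _ h1
      exact absurd this.symm (Fin.castSucc_lt_last j).ne
  · rintro ⟨⟨hnz, hinj⟩, hx0, hxvals⟩
    constructor
    · intro j
      induction j using Fin.lastCases with
      | last => rw [peel_symm_last]; exact hx0
      | cast j => rw [peel_symm_castSucc]; exact hnz j
    · intro j1 j2 hval
      induction j1 using Fin.lastCases with
      | last =>
        induction j2 using Fin.lastCases with
        | last => rfl
        | cast j2 =>
          rw [peel_symm_last, peel_symm_castSucc] at hval
          exact absurd hval (hxvals j2)
      | cast j1 =>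
        induction j2 using Fin.lastCases with
        | last =>
          rw [peel_symm_last, peel_symm_castSucc] at hval
          exact absurd hval.symm (hxvals j1)
        | cast j2 =>
          rw [peel_symm_castSucc, peel_symm_castSucc] at hval
          rw [hinj j1 j2 hval]

lemma Ac_peel (m c : ℕ) (g' : ∀ j : Fin m, Fin (c + j.1 + 1)) (x : Fin (c + m + 1)) :
    Ac (m+1) c ((peel m c).symm (g', x)) ↔
      ((x : ℕ) = 0 ∧ Bc m c g') ∨
        ((x : ℕ) ≠ 0 ∧ Ac m c g' ∧ ∀ j, (x : ℕ) ≠ (g' j : ℕ)) := by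
  set e := (peel m c).symm (g', x) with he
  have eCast : ∀ j : Fin m, (e j.castSucc : ℕ) = (g' j : ℕ) := peel_symm_castSucc m c g' x
  have eLast : (e (Fin.last m) : ℕ) = (x : ℕ) := peel_symm_last m c g' x
  constructor
  · rintro ⟨⟨j0, hj0, hj0u⟩, hinj⟩
    by_cases hx : (x : ℕ) = 0
    · left
      have hlz : (e (Fin.last m) : ℕ) = 0 := by rw [eLast]; exact hx
      have hlj0 : Fin.last m = j0 := hj0u _ hlz
      refine ⟨hx, fun j h0 => ?_, fun j1 j2 hval => ?_⟩
      · have hz : (e j.castSucc : ℕ) = 0 := by rw [eCast]; exact h0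
        have h1 := (hj0u _ hz).trans hlj0.symm
        exact absurd h1 (Fin.castSucc_lt_last j).ne
      · by_cases h0 : (g' j1 : ℕ) = 0
        · have hz1 : (e j1.castSucc : ℕ) = 0 := by rw [eCast]; exact h0
          have h1 := (hj0u _ hz1).trans hlj0.symm
          exact absurd h1 (Fin.castSucc_lt_last j1).ne
        · have hne : (e j1.castSucc : ℕ) ≠ 0 := by rw [eCast]; exact h0
          have hvv : (e j1.castSucc : ℕ) = (e j2.castSucc : ℕ) := by
            rw [eCast, eCast]; exact hval
          exact Fin.castSucc_injective m (hinj _ _ hne hvv)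
    · right
      have hj0l : j0 ≠ Fin.last m := by
        intro h; rw [h, eLast] at hj0; exact hx hj0
      obtain ⟨j0', rfl⟩ := Fin.eq_castSucc_of_ne_last hj0l
      rw [eCast] at hj0
      refine ⟨hx, ⟨⟨j0', hj0, fun j hj => ?_⟩, fun j1 j2 h0 hval => ?_⟩, fun j hval => ?_⟩
      · have hz : (e j.castSucc : ℕ) = 0 := by rw [eCast]; exact hj
        exact Fin.castSucc_injective m (hj0u _ hz)
      · have hne : (e j1.castSucc : ℕ) ≠ 0 := by rw [eCast]; exact h0
        have hvv : (e j1.castSucc : ℕ) = (e j2.castSucc : ℕ) := by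
          rw [eCast, eCast]; exact hval
        exact Fin.castSucc_injective m (hinj _ _ hne hvv)
      · have hne : (e (Fin.last m) : ℕ) ≠ 0 := by rw [eLast]; exact hx
        have hvv : (e (Fin.last m) : ℕ) = (e j.castSucc : ℕ) := by
          rw [eLast, eCast]; exact hval
        exact absurd (hinj _ _ hne hvv).symm (Fin.castSucc_lt_last j).ne
  · rintro (⟨hx, hnz, hinj⟩ | ⟨hx, ⟨⟨j0, hj0, hj0u⟩, hinj⟩, hxvals⟩)
    · refine ⟨⟨Fin.last m, ?_, fun j hj => ?_⟩, fun j1 j2 h0 hval => ?_⟩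
      · show (e (Fin.last m) : ℕ) = 0
        rw [eLast]; exact hx
      · have hj' : (e j : ℕ) = 0 := hj
        induction j using Fin.lastCases with
        | last => rfl
        | cast j => rw [eCast] at hj'; exact absurd hj' (hnz j)
      · induction j1 using Fin.lastCases with
        | last =>
          induction j2 using Fin.lastCases with
          | last => rfl
          | cast j2 =>
            rw [eLast, eCast] at hval
            rw [eLast] at h0
            exact absurd (hval.symm.trans hx) (hnz j2)
        | cast j1 =>
          induction j2 using Fin.lastCases with
          | last =>
            rw [eCast, eLast] at hval
            exact absurd (hval.trans hx) (hnz j1)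
          | cast j2 =>
            rw [eCast, eCast] at hval
            rw [hinj j1 j2 hval]
    · refine ⟨⟨j0.castSucc, ?_, fun j hj => ?_⟩, fun j1 j2 h0 hval => ?_⟩
      · show (e j0.castSucc : ℕ) = 0
        rw [eCast]; exact hj0
      · have hj' : (e j : ℕ) = 0 := hj
        induction j using Fin.lastCases with
        | last => rw [eLast] at hj'; exact absurd hj' hx
        | cast j =>
          rw [eCast] at hj'
          rw [hj0u j hj']
      · induction j1 using Fin.lastCases with
        | last =>
          induction j2 using Fin.lastCases with
          | last => rfl
          | cast j2 =>
            rw [eLast, eCast] at hval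
            exact absurd hval (hxvals j2)
        | cast j1 =>
          induction j2 using Fin.lastCases with
          | last =>
            rw [eCast, eLast] at hval
            exact absurd hval.symm (hxvals j1)
          | cast j2 =>
            rw [eCast, eCast] at hval
            rw [eCast] at h0
            rw [hinj j1 j2 h0 hval]

open Finset in
lemma card_filter_val_mem (N : ℕ) (S : Finset ℕ) (hS : ∀ a ∈ S, a < N) :
    (univ.filter fun x : Fin N => (x : ℕ) ∈ S).card = S.card := by
  classical
  refine Finset.card_bij (fun x _ => (x : ℕ)) ?_ ?_ ?_
  · intro x hx; exact (Finset.mem_filter.mp hx).2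
  · intro x _ y _ h; exact Fin.ext h
  · intro a ha
    exact ⟨⟨a, hS a ha⟩, Finset.mem_filter.mpr ⟨Finset.mem_univ _, ha⟩, rfl⟩

open Finset in
lemma card_filter_val_not_mem (N : ℕ) (S : Finset ℕ) (hS : ∀ a ∈ S, a < N) :
    (univ.filter fun x : Fin N => (x : ℕ) ∉ S).card = N - S.card := by
  classical
  have h := Finset.card_filter_add_card_filter_not
    (s := (univ : Finset (Fin N))) (p := fun x : Fin N => (x : ℕ) ∈ S)
  rw [Finset.card_univ, Fintype.card_fin, card_filter_val_mem N S hS] at h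
  omega

open Finset in
lemma card_B (m c : ℕ) :
    Nat.card {g : ∀ j : Fin m, Fin (c + j.1 + 1) // Bc m c g} = c ^ m := by
  induction m with
  | zero =>
    have hall : ∀ g : (∀ j : Fin 0, Fin (c + j.1 + 1)), Bc 0 c g :=
      fun g => ⟨fun j => j.elim0, fun j1 => j1.elim0⟩
    rw [Nat.card_congr (Equiv.subtypeUnivEquiv hall)]
    simp [Nat.card_eq_fintype_card]
  | succ m ih =>
    classical
    have E1 : {g : ∀ j : Fin (m+1), Fin (c + j.1 + 1) // Bc (m+1) c g} ≃
        Σ g' : (∀ j : Fin m, Fin (c + j.1 + 1)),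
          {x : Fin (c + m + 1) // Bc m c g' ∧ (x : ℕ) ≠ 0 ∧ ∀ j, (x : ℕ) ≠ (g' j : ℕ)} := by
      refine (Equiv.subtypeEquiv (peel m c)
        (q := fun p => Bc (m+1) c ((peel m c).symm (p.1, p.2))) (fun g => ?_)).trans
        ((Equiv.subtypeProdEquivSigmaSubtype
          (fun a b => Bc (m+1) c ((peel m c).symm (a, b)))).trans
          (Equiv.sigmaCongrRight (fun g' => Equiv.subtypeEquivRight (fun x => Bc_peel m c g' x))))
      simp only [Prod.mk.eta, Equiv.symm_apply_apply]
    rw [Nat.card_congr E1, Nat.card_eq_fintype_card, Fintype.card_sigma]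
    have hfib : ∀ g' : (∀ j : Fin m, Fin (c + j.1 + 1)),
        Fintype.card {x : Fin (c + m + 1) // Bc m c g' ∧ (x : ℕ) ≠ 0 ∧
          ∀ j, (x : ℕ) ≠ (g' j : ℕ)} = if Bc m c g' then c else 0 := by
      intro g'
      by_cases hB : Bc m c g'
      · rw [if_pos hB, Fintype.card_subtype]
        set S : Finset ℕ := insert 0 (univ.image fun j => (g' j : ℕ)) with hs
        have hSmem : ∀ a ∈ S, a < c + m + 1 := by
          intro a ha
          rw [hs, Finset.mem_insert] at ha
          rcases ha with h | h
          · omega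
          · obtain ⟨j, _, rfl⟩ := Finset.mem_image.mp h
            have := (g' j).isLt
            have := j.isLt
            omega
        have hScard : S.card = m + 1 := by
          rw [hs, Finset.card_insert_of_notMem (by
            simp only [Finset.mem_image, Finset.mem_univ, true_and, not_exists]
            intro j h
            exact hB.1 j h),
            Finset.card_image_of_injective _ (fun a b h => hB.2 a b h),
            Finset.card_univ, Fintype.card_fin]
        have hfe : (univ.filter fun x : Fin (c + m + 1) =>
            Bc m c g' ∧ (x : ℕ) ≠ 0 ∧ ∀ j, (x : ℕ) ≠ (g' j : ℕ)) =
            (univ.filter fun x : Fin (c + m + 1) => (x : ℕ) ∉ S) := by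
          apply Finset.filter_congr
          intro x _
          simp only [hs, Finset.mem_insert, Finset.mem_image, Finset.mem_univ, true_and,
            not_or, not_exists]
          constructor
          · rintro ⟨_, hx0, hav⟩
            exact ⟨hx0, fun j h => hav j h.symm⟩
          · rintro ⟨hx0, hav⟩
            exact ⟨hB, hx0, fun j h => hav j h.symm⟩
        rw [hfe, card_filter_val_not_mem _ _ hSmem, hScard]
        omega
      · rw [if_neg hB]
        simp [hB]
    rw [Finset.sum_congr rfl (fun g' _ => hfib g')]
    rw [← Finset.sum_filter, Finset.sum_const, smul_eq_mul]
    rw [← Fintype.card_subtype, ← Nat.card_eq_fintype_card, ih, ← pow_succ]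

open Finset in
lemma card_A (m c : ℕ) :
    Nat.card {g : ∀ j : Fin m, Fin (c + j.1 + 1) // Ac m c g} = (c+1) ^ m - c ^ m := by
  induction m with
  | zero =>
    have : IsEmpty {g : ∀ j : Fin 0, Fin (c + j.1 + 1) // Ac 0 c g} := by
      refine ⟨fun ⟨g, hA⟩ => ?_⟩
      obtain ⟨j, _, _⟩ := hA.1
      exact j.elim0
    simp [Nat.card_of_isEmpty]
  | succ m ih =>
    classical
    have E1 : {g : ∀ j : Fin (m+1), Fin (c + j.1 + 1) // Ac (m+1) c g} ≃
        Σ g' : (∀ j : Fin m, Fin (c + j.1 + 1)),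
          {x : Fin (c + m + 1) // ((x : ℕ) = 0 ∧ Bc m c g') ∨
            ((x : ℕ) ≠ 0 ∧ Ac m c g' ∧ ∀ j, (x : ℕ) ≠ (g' j : ℕ))} := by
      refine (Equiv.subtypeEquiv (peel m c)
        (q := fun p => Ac (m+1) c ((peel m c).symm (p.1, p.2))) (fun g => ?_)).trans
        ((Equiv.subtypeProdEquivSigmaSubtype
          (fun a b => Ac (m+1) c ((peel m c).symm (a, b)))).trans
          (Equiv.sigmaCongrRight (fun g' => Equiv.subtypeEquivRight (fun x => Ac_peel m c g' x))))
      simp only [Prod.mk.eta, Equiv.symm_apply_apply]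
    rw [Nat.card_congr E1, Nat.card_eq_fintype_card, Fintype.card_sigma]
    have hfib : ∀ g' : (∀ j : Fin m, Fin (c + j.1 + 1)),
        Fintype.card {x : Fin (c + m + 1) // ((x : ℕ) = 0 ∧ Bc m c g') ∨
            ((x : ℕ) ≠ 0 ∧ Ac m c g' ∧ ∀ j, (x : ℕ) ≠ (g' j : ℕ))} =
          (if Bc m c g' then 1 else 0) + (if Ac m c g' then c + 1 else 0) := by
      intro g'
      rw [Fintype.card_subtype, Finset.filter_or, Finset.card_union_of_disjoint (by
        rw [Finset.disjoint_left]
        intro x hx1 hx2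
        exact (Finset.mem_filter.mp hx2).2.1 (Finset.mem_filter.mp hx1).2.1)]
      congr 1
      · by_cases hB : Bc m c g'
        · rw [if_pos hB]
          have hfe : (univ.filter fun x : Fin (c + m + 1) => (x : ℕ) = 0 ∧ Bc m c g') =
              (univ.filter fun x : Fin (c + m + 1) => (x : ℕ) ∈ ({0} : Finset ℕ)) := by
            apply Finset.filter_congr
            intro x _
            simp [hB]
          rw [hfe, card_filter_val_mem _ _ (by intro a ha; simp at ha; omega)]
          simp
        · rw [if_neg hB]
          simp [hB]
      · by_cases hA : Ac m c g'
        · rw [if_pos hA]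
          set S : Finset ℕ := univ.image fun j => (g' j : ℕ) with hs
          have hSmem : ∀ a ∈ S, a < c + m + 1 := by
            intro a ha
            obtain ⟨j, _, rfl⟩ := Finset.mem_image.mp ha
            have := (g' j).isLt
            have := j.isLt
            omega
          have hScard : S.card = m := by
            rw [hs, Finset.card_image_of_injective _ (fun a b h => by
              by_cases h0 : (g' a : ℕ) = 0
              · have h0' : (g' b : ℕ) = 0 := h ▸ h0
                obtain ⟨j0, _, hu⟩ := hA.1
                rw [hu a h0, hu b h0']
              · exact hA.2 a b h0 h),
              Finset.card_univ, Fintype.card_fin]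
          have hfe : (univ.filter fun x : Fin (c + m + 1) =>
              (x : ℕ) ≠ 0 ∧ Ac m c g' ∧ ∀ j, (x : ℕ) ≠ (g' j : ℕ)) =
              (univ.filter fun x : Fin (c + m + 1) => (x : ℕ) ∉ S) := by
            apply Finset.filter_congr
            intro x _
            simp only [hs, Finset.mem_image, Finset.mem_univ, true_and, not_exists]
            constructor
            · rintro ⟨_, _, hav⟩
              exact fun j h => hav j h.symm
            · intro hav
              obtain ⟨j0, hj0, _⟩ := hA.1
              refine ⟨fun h0 => hav j0 (hj0.trans h0.symm), hA, fun j h => hav j h.symm⟩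
          rw [hfe, card_filter_val_not_mem _ _ hSmem, hScard]
          omega
        · rw [if_neg hA]
          simp [hA]
    rw [Finset.sum_congr rfl (fun g' _ => hfib g'), Finset.sum_add_distrib]
    rw [← Finset.sum_filter, ← Finset.sum_filter, Finset.sum_const, Finset.sum_const,
      smul_eq_mul, smul_eq_mul, mul_one]
    rw [← Fintype.card_subtype, ← Fintype.card_subtype,
      ← Nat.card_eq_fintype_card, ← Nat.card_eq_fintype_card, ih, card_B]
    have h1 : c ^ m ≤ (c+1) ^ m := Nat.pow_le_pow_left (by omega) m
    have h2 : c ^ (m+1) ≤ (c+1) ^ (m+1) := Nat.pow_le_pow_left (by omega) (m+1)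
    rw [pow_succ, pow_succ] at *
    zify [h1, h2]
    ring

def Qc (n k : ℕ) (e : ∀ i : Fin n, Fin (i.1 + 1)) : Prop :=
  (∀ i : Fin n, i.1 < n - k → (e i : ℕ) = 0) ∧
    (∃! i : Fin n, n - k ≤ i.1 ∧ (e i : ℕ) = 0) ∧
    ∀ i1 i2 : Fin n, (e i1 : ℕ) ≠ 0 → (e i1 : ℕ) = (e i2 : ℕ) → i1 = i2

def tailEquiv (n k : ℕ) (hkn : k ≤ n) :
    {e : ∀ i : Fin n, Fin (i.1 + 1) // Qc n k e} ≃
      {g : ∀ j : Fin k, Fin ((n - k) + j.1 + 1) // Ac k (n - k) g} where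
  toFun ep :=
    ⟨fun j => ep.1 ⟨n - k + j.1, by have := j.isLt; omega⟩, by
      obtain ⟨e, hpre, ⟨i0, ⟨hi0ge, hi0z⟩, hu⟩, hinj⟩ := ep
      constructor
      · refine ⟨⟨i0.1 - (n - k), by have := i0.isLt; omega⟩, ?_, ?_⟩
        · show (e ⟨n - k + (i0.1 - (n - k)), _⟩ : ℕ) = 0
          have hidx : (⟨n - k + (i0.1 - (n - k)), by have := i0.isLt; omega⟩ : Fin n) = i0 :=
            Fin.ext (show n - k + (i0.1 - (n - k)) = i0.1 by omega)
          exact (congrArg (fun t => ((e t : ℕ))) hidx).trans hi0z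
        · intro j hj
          have hj' : (e ⟨n - k + j.1, by have := j.isLt; omega⟩ : ℕ) = 0 := hj
          have h2 := hu ⟨n - k + j.1, by have := j.isLt; omega⟩
            ⟨(Nat.le_add_right _ _ : n - k ≤ n - k + j.1), hj'⟩
          have hval : n - k + j.1 = i0.1 := congrArg Fin.val h2
          exact Fin.ext (show j.1 = i0.1 - (n - k) by omega)
      · intro j1 j2 hne hval
        have h2 := hinj ⟨n - k + j1.1, by have := j1.isLt; omega⟩
          ⟨n - k + j2.1, by have := j2.isLt; omega⟩ hne hval
        have hval2 : n - k + j1.1 = n - k + j2.1 := congrArg Fin.val h2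
        exact Fin.ext (show j1.1 = j2.1 by omega)⟩
  invFun gp :=
    ⟨fun i => if h : i.1 < n - k then ⟨0, Nat.succ_pos _⟩ else
        Fin.cast (show n - k + (i.1 - (n - k)) + 1 = i.1 + 1 by have := i.isLt; omega)
          (gp.1 ⟨i.1 - (n - k), by have := i.isLt; omega⟩), by
      obtain ⟨g, ⟨j0, hj0, hju⟩, hinj⟩ := gp
      refine ⟨fun i hi => ?_, ?_, ?_⟩
      · show ((if h : i.1 < n - k then _ else _ : Fin _) : ℕ) = 0
        rw [dif_pos hi]
      · refine ⟨⟨n - k + j0.1, by have := j0.isLt; omega⟩,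
          ⟨(Nat.le_add_right _ _ : n - k ≤ n - k + j0.1), ?_⟩, ?_⟩
        · show ((if h : n - k + j0.1 < n - k then _
              else Fin.cast _ (g ⟨n - k + j0.1 - (n - k), _⟩) : Fin _) : ℕ) = 0
          rw [dif_neg (by omega)]
          rw [Fin.coe_cast]
          have hidx : (⟨n - k + j0.1 - (n - k), by have := j0.isLt; omega⟩ : Fin k) = j0 :=
            Fin.ext (show n - k + j0.1 - (n - k) = j0.1 by omega)
          exact (congrArg (fun t => ((g t : ℕ))) hidx).trans hj0
        · rintro i ⟨hige, hiz⟩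
          dsimp only at hiz
          rw [dif_neg (by omega), Fin.coe_cast] at hiz
          have h2 := hju ⟨i.1 - (n - k), by have := i.isLt; omega⟩ hiz
          have hval : i.1 - (n - k) = j0.1 := congrArg Fin.val h2
          exact Fin.ext (show i.1 = n - k + j0.1 by omega)
      · intro i1 i2 hne hval
        dsimp only at hne hval
        by_cases h1 : i1.1 < n - k
        · rw [dif_pos h1] at hne
          exact absurd rfl hne
        · by_cases h2 : i2.1 < n - k
          · rw [dif_pos h2] at hval
            rw [dif_neg h1, Fin.coe_cast] at hval hne
            exact absurd hval hne
          · rw [dif_neg h1, Fin.coe_cast] at hval hne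
            rw [dif_neg h2, Fin.coe_cast] at hval
            have h3 := hinj _ _ hne hval
            have hval2 : i1.1 - (n - k) = i2.1 - (n - k) := congrArg Fin.val h3
            exact Fin.ext (show i1.1 = i2.1 by omega)⟩
  left_inv := by
    rintro ⟨e, hQ⟩
    apply Subtype.ext
    funext i
    show (if h : i.1 < n - k then _ else Fin.cast _ (e ⟨n - k + (i.1 - (n - k)), _⟩)) = e i
    by_cases h : i.1 < n - k
    · rw [dif_pos h]
      apply Fin.ext
      exact (hQ.1 i h).symm
    · rw [dif_neg h]
      apply Fin.ext
      rw [Fin.coe_cast]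
      exact congrArg (fun t => ((e t : ℕ)))
        (Fin.ext (show n - k + (i.1 - (n - k)) = i.1 by omega) :
          (⟨n - k + (i.1 - (n - k)), by have := i.isLt; omega⟩ : Fin n) = i)
  right_inv := by
    rintro ⟨g, hA⟩
    apply Subtype.ext
    funext j
    show (if h : n - k + j.1 < n - k then _
        else Fin.cast _ (g ⟨n - k + j.1 - (n - k), _⟩)) = g j
    rw [dif_neg (by omega)]
    apply Fin.ext
    rw [Fin.coe_cast]
    exact congrArg (fun t => ((g t : ℕ)))
      (Fin.ext (show n - k + j.1 - (n - k) = j.1 by omega) :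
        (⟨n - k + j.1 - (n - k), by have := j.isLt; omega⟩ : Fin k) = j)

open Finset in
lemma card_filter_lt (n m : ℕ) (hm : m ≤ n) :
    ((univ : Finset (Fin n)).filter (fun i => i.1 < m)).card = m := by
  classical
  have h1 : ((univ : Finset (Fin n)).filter (fun i => i.1 < m)) =
      ((univ : Finset (Fin n)).filter (fun i : Fin n => (i : ℕ) ∈ Finset.range m)) := by
    apply Finset.filter_congr
    intro x _
    simp
  rw [h1, card_filter_val_mem n (Finset.range m) (by intro a ha; rw [Finset.mem_range] at ha; omega),
    Finset.card_range]

open Finset in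
lemma P_iff_Q (n k : ℕ) (hk : 1 ≤ k) (hkn : k ≤ n) (e : ∀ i : Fin n, Fin (i.1 + 1)) :
    ((¬ ∃ i j l : Fin n, i < j ∧ j < l ∧
        (e i : ℕ) ≠ (e j : ℕ) ∧ (e j : ℕ) = (e l : ℕ)) ∧
      (Set.range fun i => (e i : ℕ)).ncard = k) ↔ Qc n k e := by
  classical
  have hn : 0 < n := lt_of_lt_of_le hk hkn
  have hv0 : ∀ i : Fin n, i.1 = 0 → (e i : ℕ) = 0 := by
    intro i h
    have := (e i).isLt
    omega
  have hrange : (Set.range fun i => (e i : ℕ)).ncard =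
      ((univ : Finset (Fin n)).image fun i : Fin n => (e i : ℕ)).card := by
    rw [← Set.image_univ, ← Finset.coe_univ, ← Finset.coe_image, Set.ncard_coe_finset]
  have himg : ((univ : Finset (Fin n)).image fun i : Fin n => (e i : ℕ)) =
      insert 0 (((univ : Finset (Fin n)).filter fun i : Fin n => (e i : ℕ) ≠ 0).image
        fun i : Fin n => (e i : ℕ)) := by
    ext a
    simp only [Finset.mem_image, Finset.mem_insert, Finset.mem_filter, Finset.mem_univ, true_and]
    constructor
    · rintro ⟨i, rfl⟩
      by_cases h : (e i : ℕ) = 0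
      · exact Or.inl h
      · exact Or.inr ⟨i, h, rfl⟩
    · rintro (rfl | ⟨i, _, rfl⟩)
      · exact ⟨⟨0, hn⟩, hv0 _ rfl⟩
      · exact ⟨i, rfl⟩
  have hkey : ∀ (_ : ∀ i1 i2 : Fin n, (e i1 : ℕ) ≠ 0 → (e i1 : ℕ) = (e i2 : ℕ) → i1 = i2),
      ((univ : Finset (Fin n)).image fun i : Fin n => (e i : ℕ)).card =
        ((univ : Finset (Fin n)).filter fun i : Fin n => (e i : ℕ) ≠ 0).card + 1 := by
    intro hinj
    rw [himg, Finset.card_insert_of_notMem (by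
      simp only [Finset.mem_image, Finset.mem_filter, Finset.mem_univ, true_and, not_exists]
      rintro i ⟨h, h2⟩
      exact h h2),
      Finset.card_image_of_injOn (fun i hi j hj h =>
        hinj i j (Finset.mem_filter.mp hi).2 h)]
  have hZNZ : ((univ : Finset (Fin n)).filter fun i : Fin n => (e i : ℕ) = 0).card +
      ((univ : Finset (Fin n)).filter fun i : Fin n => (e i : ℕ) ≠ 0).card = n := by
    have := Finset.card_filter_add_card_filter_not
      (s := (univ : Finset (Fin n))) (p := fun i : Fin n => (e i : ℕ) = 0)
    rw [Finset.card_univ, Fintype.card_fin] at this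
    convert this using 3
  constructor
  · rintro ⟨hP, hcard⟩
    have hinj : ∀ i1 i2 : Fin n, (e i1 : ℕ) ≠ 0 → (e i1 : ℕ) = (e i2 : ℕ) → i1 = i2 := by
      intro i1 i2 h0 hval
      by_contra hne
      rcases lt_or_gt_of_ne hne with h | h
      · refine hP ⟨⟨0, hn⟩, i1, i2, ?_, h, ?_, hval⟩
        · show (0 : ℕ) < i1.1
          rcases Nat.eq_zero_or_pos i1.1 with h1 | h1
          · exact absurd (hv0 i1 h1) h0
          · exact h1
        · rw [hv0 ⟨0, hn⟩ rfl]
          exact fun hh => h0 hh.symm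
      · have h0' : (e i2 : ℕ) ≠ 0 := fun hh => h0 (hval.trans hh)
        refine hP ⟨⟨0, hn⟩, i2, i1, ?_, h, ?_, hval.symm⟩
        · show (0 : ℕ) < i2.1
          rcases Nat.eq_zero_or_pos i2.1 with h1 | h1
          · exact absurd (hv0 i2 h1) h0'
          · exact h1
        · rw [hv0 ⟨0, hn⟩ rfl]
          exact fun hh => h0' hh.symm
    have hNZ : ((univ : Finset (Fin n)).filter fun i : Fin n => (e i : ℕ) ≠ 0).card = k - 1 := by
      have := hkey hinj
      rw [hrange, this] at hcard
      omega
    have hZ : ((univ : Finset (Fin n)).filter fun i : Fin n => (e i : ℕ) = 0).card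
        = n - k + 1 := by omega
    have hL2 : ∀ i j l : Fin n, i < j → j < l → (e j : ℕ) = 0 → (e l : ℕ) = 0 →
        (e i : ℕ) = 0 := by
      intro i j l hij hjl hj0 hl0
      by_contra h
      exact hP ⟨i, j, l, hij, hjl, fun hh => h (hh.trans hj0), hj0.trans hl0.symm⟩
    have hpre : ∀ i : Fin n, i.1 < n - k → (e i : ℕ) = 0 := by
      intro i hi
      by_contra hzi
      have hsub : ((univ : Finset (Fin n)).filter fun j : Fin n => (e j : ℕ) = 0) ⊆
          ((univ : Finset (Fin n)).filter fun j : Fin n => j.1 < i.1) ∪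
            ((univ : Finset (Fin n)).filter fun j : Fin n => (e j : ℕ) = 0 ∧ i < j) := by
        intro j hj
        rw [Finset.mem_filter] at hj
        rcases lt_trichotomy j.1 i.1 with h | h | h
        · exact Finset.mem_union_left _ (Finset.mem_filter.mpr ⟨Finset.mem_univ _, h⟩)
        · exact absurd (Fin.ext h ▸ hj.2) hzi
        · exact Finset.mem_union_right _
            (Finset.mem_filter.mpr ⟨Finset.mem_univ _, hj.2, h⟩)
      have hcard2 := Finset.card_le_card hsub
      have hcard3 := Finset.card_union_le
        ((univ : Finset (Fin n)).filter fun j : Fin n => j.1 < i.1)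
        ((univ : Finset (Fin n)).filter fun j : Fin n => (e j : ℕ) = 0 ∧ i < j)
      rw [card_filter_lt n i.1 (le_of_lt i.isLt)] at hcard3
      have h2le : 2 ≤ ((univ : Finset (Fin n)).filter
          fun j : Fin n => (e j : ℕ) = 0 ∧ i < j).card := by omega
      obtain ⟨a, ha, b, hb, hab⟩ := Finset.one_lt_card.mp (lt_of_lt_of_le Nat.one_lt_two h2le)
      rw [Finset.mem_filter] at ha hb
      rcases lt_or_gt_of_ne hab with h | h
      · exact hzi (hL2 i a b ha.2.2 h ha.2.1 hb.2.1)
      · exact hzi (hL2 i b a hb.2.2 h hb.2.1 ha.2.1)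
    have huniq : ∃! i : Fin n, n - k ≤ i.1 ∧ (e i : ℕ) = 0 := by
      have hsub : ((univ : Finset (Fin n)).filter fun j : Fin n => (e j : ℕ) = 0) ⊆
          ((univ : Finset (Fin n)).filter fun j : Fin n => j.1 < n - k) ∪
            ((univ : Finset (Fin n)).filter fun j : Fin n => n - k ≤ j.1 ∧ (e j : ℕ) = 0) := by
        intro j hj
        rw [Finset.mem_filter] at hj
        by_cases h : j.1 < n - k
        · exact Finset.mem_union_left _ (Finset.mem_filter.mpr ⟨Finset.mem_univ _, h⟩)
        · exact Finset.mem_union_right _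
            (Finset.mem_filter.mpr ⟨Finset.mem_univ _, by omega, hj.2⟩)
      have hcard2 := Finset.card_le_card hsub
      have hcard3 := Finset.card_union_le
        ((univ : Finset (Fin n)).filter fun j : Fin n => j.1 < n - k)
        ((univ : Finset (Fin n)).filter fun j : Fin n => n - k ≤ j.1 ∧ (e j : ℕ) = 0)
      rw [card_filter_lt n (n - k) (by omega)] at hcard3
      have h1le : 1 ≤ ((univ : Finset (Fin n)).filter
          fun j : Fin n => n - k ≤ j.1 ∧ (e j : ℕ) = 0).card := by omega
      obtain ⟨i0, hi0⟩ := Finset.card_pos.mp (lt_of_lt_of_le Nat.zero_lt_one h1le)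
      rw [Finset.mem_filter] at hi0
      refine ⟨i0, hi0.2, ?_⟩
      intro i1 hi1
      by_contra hne
      -- two distinct tail zeros; derive too many zeros
      have key : ∀ a b : Fin n, a < b → n - k ≤ a.1 → (e a : ℕ) = 0 → (e b : ℕ) = 0 → False := by
        intro a b hab hage ha0 hb0
        have hsub2 : ((univ : Finset (Fin n)).filter fun j : Fin n => j.1 < a.1) ∪ {a, b} ⊆
            ((univ : Finset (Fin n)).filter fun j : Fin n => (e j : ℕ) = 0) := by
          apply Finset.union_subset
          · intro j hj
            rw [Finset.mem_filter] at hj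
            exact Finset.mem_filter.mpr ⟨Finset.mem_univ _,
              hL2 j a b (show j.1 < a.1 from hj.2) hab ha0 hb0⟩
          · intro j hj
            rw [Finset.mem_insert, Finset.mem_singleton] at hj
            rcases hj with rfl | rfl
            · exact Finset.mem_filter.mpr ⟨Finset.mem_univ _, ha0⟩
            · exact Finset.mem_filter.mpr ⟨Finset.mem_univ _, hb0⟩
        have hdisj : Disjoint ((univ : Finset (Fin n)).filter fun j : Fin n => j.1 < a.1)
            ({a, b} : Finset (Fin n)) := by
          rw [Finset.disjoint_right]
          intro x hx
          rw [Finset.mem_insert, Finset.mem_singleton] at hx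
          rw [Finset.mem_filter]
          rcases hx with rfl | rfl
          · exact fun h => lt_irrefl _ h.2
          · intro h
            have : a.1 < x.1 := hab
            omega
        have hc1 := Finset.card_le_card hsub2
        rw [Finset.card_union_of_disjoint hdisj, card_filter_lt n a.1 (le_of_lt a.isLt),
          Finset.card_pair (Fin.ne_of_lt hab), hZ] at hc1
        omega
      rcases lt_or_gt_of_ne hne with h | h
      · exact key i1 i0 h hi1.1 hi1.2 hi0.2.2
      · exact key i0 i1 h hi0.2.1 hi0.2.2 hi1.2
    exact ⟨hpre, huniq, hinj⟩
  · rintro ⟨hpre, ⟨i0, ⟨hi0ge, hi0z⟩, hu⟩, hinj⟩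
    constructor
    · rintro ⟨i, j, l, hij, hjl, hne, heq⟩
      by_cases hj0 : (e j : ℕ) = 0
      · by_cases hjtail : n - k ≤ j.1
        · have hl0 : (e l : ℕ) = 0 := heq.symm.trans hj0
          have hjl' : j.1 < l.1 := hjl
          have h1 := hu j ⟨hjtail, hj0⟩
          have h2 := hu l ⟨by omega, hl0⟩
          exact (Fin.ne_of_lt hjl) (h1.trans h2.symm)
        · have hij' : i.1 < j.1 := hij
          exact hne ((hpre i (by omega)).trans hj0.symm)
      · exact (Fin.ne_of_lt hjl) (hinj j l hj0 heq)
    · rw [hrange, hkey hinj]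
      have hNZeq : ((univ : Finset (Fin n)).filter fun i : Fin n => (e i : ℕ) ≠ 0) =
          ((univ : Finset (Fin n)).filter fun i : Fin n => n - k ≤ i.1) \ {i0} := by
        ext i
        rw [Finset.mem_sdiff, Finset.mem_filter, Finset.mem_filter, Finset.mem_singleton]
        simp only [Finset.mem_univ, true_and]
        constructor
        · intro h
          refine ⟨?_, ?_⟩
          · by_contra hlt
            exact h (hpre i (by omega))
          · intro hh
            exact h (hh ▸ hi0z)
        · rintro ⟨hge, hne0⟩ h0
          exact hne0 (hu i ⟨hge, h0⟩)
      rw [hNZeq, Finset.card_sdiff_of_subset (by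
        rw [Finset.singleton_subset_iff, Finset.mem_filter]
        exact ⟨Finset.mem_univ _, hi0ge⟩)]
      have hge_card : ((univ : Finset (Fin n)).filter fun i : Fin n => n - k ≤ i.1).card = k := by
        have := Finset.card_filter_add_card_filter_not
          (s := (univ : Finset (Fin n))) (p := fun i : Fin n => i.1 < n - k)
        rw [Finset.card_univ, Fintype.card_fin, card_filter_lt n (n - k) (by omega)] at this
        have heq2 : ((univ : Finset (Fin n)).filter fun i : Fin n => ¬ i.1 < n - k) =
            ((univ : Finset (Fin n)).filter fun i : Fin n => n - k ≤ i.1) := by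
          apply Finset.filter_congr
          intro x _
          constructor
          · intro h; omega
          · intro h; omega
        rw [heq2] at this
        omega
      rw [Finset.card_singleton, hge_card]
      omega


theorem stmt19 (n k : ℕ) (hk : 1 ≤ k) (hkn : k ≤ n) :
    Nat.card {e : InvSeq n //
      (¬ ∃ i j l : Fin n, i < j ∧ j < l ∧
        (e i : ℕ) ≠ (e j : ℕ) ∧ (e j : ℕ) = (e l : ℕ)) ∧
      (Set.range fun i => (e i : ℕ)).ncard = k} =
    (n + 1 - k) ^ k - (n - k) ^ k := by
  have hiff := P_iff_Q n k hk hkn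
  have h2 : Nat.card {g : ∀ j : Fin k, Fin ((n - k) + j.1 + 1) // Ac k (n - k) g} =
      (n + 1 - k) ^ k - (n - k) ^ k := by
    rw [card_A]
    congr 2
    omega
  exact (Nat.card_congr ((Equiv.subtypeEquivRight hiff).trans (tailEquiv n k hkn))).trans h2
end
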